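/- arXiv:1609.06698 — 5 statements merged into one kernel-verified Lean document; each statement's English description precedes it below -/
import Mathlib

section
/- Let X be a metric space, ρ a sublinear function with ρ(r)/r nonincreasing, and γ ⊆ X a (ρ,1)-contracting subset. Suppose h : [0,1] → X is a path with d(h(s), γ) ≥ K for all s, whose endpoints x₀ = h(0), x₁ = h(1) satisfy d(x₀, γ) = d(x₁, γ) = K, where K > 0. Let |h| = d(x₀, x₁) and ‖h‖ be the arclength of h. Then ρ(K)/K ≥ (|h| − (2K + ρ(K))) / ‖h‖. -/
/-!
Set `c = ρ(K)/K`. Since `ρ(r)/r` is nonincreasing, two points `x, x'` with `d(x,γ) ≥ K` and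
`d(x,x') ≤ d(x,γ)` have projections at distance at most `c · d(x,γ)`. Walk along `h`: from the
current time `a`, either `h 1` is already within `d(h a, γ)` of `h a`, and one application of
contraction finishes, or by the intermediate value theorem there is a later time `b` with
`d(h a, h b) = d(h a, γ)`, so the projection moves by at most `c` times the arclength of
`h|[a,b]`, which is at least `K`. Hence the projections of the endpoints are at distance at
most `c (‖h‖ + K) = c ‖h‖ + ρ(K)`, while for every `δ > 0` each endpoint lies within `K + δ`
of a point of its projection.
-/

open Filter

/-- The ε-closest point projection onto a subset. -/
def EpsProj {X : Type*} [MetricSpace X] (Y : Set X) (ε : ℝ) (x : X) : Set X :=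
  {y ∈ Y | dist x y ≤ Metric.infDist x Y + ε}

/-- A subset Y is (ρ, ε)-contracting: whenever d(x,x') ≤ d(x,Y), the diameter of
π_Y^ε(x) ∪ π_Y^ε(x') is at most ρ(d(x,Y)). -/
def IsContracting {X : Type*} [MetricSpace X] (ρ : ℝ → ℝ) (ε : ℝ) (Y : Set X) : Prop :=
  ∀ x x' : X, dist x x' ≤ Metric.infDist x Y →
    Metric.diam (EpsProj Y ε x ∪ EpsProj Y ε x') ≤ ρ (Metric.infDist x Y)

open Metric Set

theorem nonempty_of_infDist_pos {X : Type*} [PseudoMetricSpace X] {x : X} {s : Set X}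
    (h : 0 < infDist x s) : s.Nonempty :=
  nonempty_iff_ne_empty.2 fun hs => by simp [hs] at h

theorem le_div_mul_of_antitoneOn_div {ρ : ℝ → ℝ} (hρ : AntitoneOn (fun r => ρ r / r) (Ioi 0))
    {K r : ℝ} (hK : 0 < K) (hKr : K ≤ r) : ρ r ≤ ρ K / K * r := by
  have hr : 0 < r := hK.trans_le hKr
  calc ρ r = ρ r / r * r := (div_mul_cancel₀ _ hr.ne').symm
    _ ≤ ρ K / K * r := mul_le_mul_of_nonneg_right (hρ hK hr hKr) hr.le

theorem LocallyBoundedVariationOn.dist_le_variationOnFromTo {α E : Type*} [LinearOrder α]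
    [PseudoMetricSpace E] {f : α → E} {s : Set α} (hf : LocallyBoundedVariationOn f s)
    {a b : α} (ha : a ∈ s) (hb : b ∈ s) (hab : a ≤ b) :
    dist (f a) (f b) ≤ variationOnFromTo f s a b := by
  rw [variationOnFromTo.eq_of_le f s hab]
  exact BoundedVariationOn.dist_le (hf a b ha hb) ⟨ha, le_rfl, hab⟩ ⟨hb, hab, le_rfl⟩

namespace EpsProj

variable {X : Type*} [MetricSpace X] {Y : Set X} {ε : ℝ}

theorem isBounded (x : X) : Bornology.IsBounded (EpsProj Y ε x) :=
  isBounded_closedBall.subset fun _ hy => mem_closedBall'.2 hy.2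

theorem exists_dist_lt (hY : Y.Nonempty) (hε : 0 < ε) (x : X) {δ : ℝ} (hδ : 0 < δ) :
    ∃ y ∈ EpsProj Y ε x, dist x y < infDist x Y + δ := by
  obtain ⟨y, hy, hxy⟩ :=
    (infDist_lt_iff hY).1 (lt_add_of_pos_right (infDist x Y) (lt_min hδ hε))
  exact ⟨y, ⟨hy, hxy.le.trans (by gcongr; exact min_le_right _ _)⟩,
    hxy.trans_le (by gcongr; exact min_le_left _ _)⟩

theorem nonempty (hY : Y.Nonempty) (hε : 0 < ε) (x : X) : (EpsProj Y ε x).Nonempty :=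
  (exists_dist_lt hY hε x one_pos).imp fun _ hy => hy.1

theorem dist_le_infDist_add_infDist_add (hY : Y.Nonempty) (hε : 0 < ε) {x x' : X} {D : ℝ}
    (hD : ∀ p ∈ EpsProj Y ε x, ∀ q ∈ EpsProj Y ε x', dist p q ≤ D) :
    dist x x' ≤ infDist x Y + infDist x' Y + D := by
  refine le_of_forall_pos_lt_add fun δ hδ => ?_
  obtain ⟨p, hp, hxp⟩ := exists_dist_lt hY hε x (half_pos hδ)
  obtain ⟨q, hq, hxq⟩ := exists_dist_lt hY hε x' (half_pos hδ)
  calc dist x x' ≤ dist x p + dist p q + dist q x' := dist_triangle4 _ _ _ _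
    _ < infDist x Y + infDist x' Y + D + δ := by
      rw [dist_comm q]; linarith [hD p hp q hq]

end EpsProj

namespace IsContracting

variable {X : Type*} [MetricSpace X] {ρ : ℝ → ℝ} {ε : ℝ} {Y : Set X} {x x' p q : X}

theorem dist_le (hY : IsContracting ρ ε Y) (hxx' : dist x x' ≤ infDist x Y)
    (hp : p ∈ EpsProj Y ε x) (hq : q ∈ EpsProj Y ε x') : dist p q ≤ ρ (infDist x Y) :=
  (dist_le_diam_of_mem ((EpsProj.isBounded x).union (EpsProj.isBounded x'))
    (Or.inl hp) (Or.inr hq)).trans (hY x x' hxx')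

theorem nonneg (hY : IsContracting ρ ε Y) (x : X) : 0 ≤ ρ (infDist x Y) :=
  diam_nonneg.trans (hY x x (by rw [dist_self]; exact infDist_nonneg))

theorem div_nonneg_of_le_infDist (hY : IsContracting ρ ε Y)
    (hρ : AntitoneOn (fun r => ρ r / r) (Ioi 0)) {K : ℝ} (hK : 0 < K)
    (hKx : K ≤ infDist x Y) : 0 ≤ ρ K / K :=
  (div_nonneg (hY.nonneg x) (hK.le.trans hKx)).trans (hρ hK (hK.trans_le hKx) hKx)

theorem dist_le_div_mul_infDist (hY : IsContracting ρ ε Y)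
    (hρ : AntitoneOn (fun r => ρ r / r) (Ioi 0)) {K : ℝ} (hK : 0 < K)
    (hKx : K ≤ infDist x Y) (hxx' : dist x x' ≤ infDist x Y)
    (hp : p ∈ EpsProj Y ε x) (hq : q ∈ EpsProj Y ε x') :
    dist p q ≤ ρ K / K * infDist x Y :=
  (hY.dist_le hxx' hp hq).trans (le_div_mul_of_antitoneOn_div hρ hK hKx)

theorem dist_le_div_mul_dist_add (hY : IsContracting ρ ε Y)
    (hρ : AntitoneOn (fun r => ρ r / r) (Ioi 0)) {K : ℝ} (hK : 0 < K)
    (hKx : K ≤ infDist x Y) (hx'K : infDist x' Y ≤ K) (hxx' : dist x x' ≤ infDist x Y)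
    (hp : p ∈ EpsProj Y ε x) (hq : q ∈ EpsProj Y ε x') :
    dist p q ≤ ρ K / K * (dist x x' + K) := by
  refine (hY.dist_le_div_mul_infDist hρ hK hKx hxx' hp hq).trans ?_
  gcongr
  · exact hY.div_nonneg_of_le_infDist hρ hK hKx
  · linarith [infDist_le_infDist_add_dist (x := x) (y := x') (s := Y)]

end IsContracting

section Path

variable {X : Type*} [MetricSpace X] {ρ : ℝ → ℝ} {ε : ℝ} {γ : Set X} {K : ℝ} {h : ℝ → X}
  {s : Set ℝ} {a t : ℝ}

theorem IsContracting.exists_variationOnFromTo_ge_and_dist_epsProj_le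
    (hcontr : IsContracting ρ ε γ) (hratio : AntitoneOn (fun r => ρ r / r) (Ioi 0))
    (hK : 0 < K) (hs : s.OrdConnected) (hcont : ContinuousOn h s)
    (hbv : LocallyBoundedVariationOn h s) (ha : a ∈ s) (ht : t ∈ s) (hat : a ≤ t)
    (hKa : K ≤ infDist (h a) γ) (hfar : infDist (h a) γ < dist (h a) (h t)) :
    ∃ b ∈ s, b ≤ t ∧ K ≤ variationOnFromTo h s a b ∧
      ∀ p ∈ EpsProj γ ε (h a), ∀ q ∈ EpsProj γ ε (h b),
        dist p q ≤ ρ K / K * variationOnFromTo h s a b := by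
  have hdist : ContinuousOn (fun u => dist (h a) (h u)) (Icc a t) :=
    (continuous_const.dist continuous_id).comp_continuousOn (hcont.mono (hs.out ha ht))
  obtain ⟨b, ⟨hab, hbt⟩, hbr⟩ := intermediate_value_Icc hat hdist
    ⟨by simpa using infDist_nonneg, hfar.le⟩
  have hb : b ∈ s := hs.out ha ht ⟨hab, hbt⟩
  have hvar : infDist (h a) γ ≤ variationOnFromTo h s a b :=
    hbr ▸ hbv.dist_le_variationOnFromTo ha hb hab
  refine ⟨b, hb, hbt, hKa.trans hvar, fun p hp q hq => ?_⟩
  refine (hcontr.dist_le_div_mul_infDist hratio hK hKa hbr.le hp hq).trans ?_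
  exact mul_le_mul_of_nonneg_left hvar (hcontr.div_nonneg_of_le_infDist hratio hK hKa)

theorem IsContracting.dist_epsProj_le_variationOnFromTo_add_of_dist_le
    (hcontr : IsContracting ρ ε γ) (hratio : AntitoneOn (fun r => ρ r / r) (Ioi 0))
    (hK : 0 < K) (hbv : LocallyBoundedVariationOn h s) (ha : a ∈ s) (ht : t ∈ s) (hat : a ≤ t)
    (hKa : K ≤ infDist (h a) γ) (htK : infDist (h t) γ ≤ K)
    (hnear : dist (h a) (h t) ≤ infDist (h a) γ) {p q : X}
    (hp : p ∈ EpsProj γ ε (h a)) (hq : q ∈ EpsProj γ ε (h t)) :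
    dist p q ≤ ρ K / K * (variationOnFromTo h s a t + K) := by
  refine (hcontr.dist_le_div_mul_dist_add hratio hK hKa htK hnear hp hq).trans ?_
  gcongr
  · exact hcontr.div_nonneg_of_le_infDist hratio hK hKa
  · exact hbv.dist_le_variationOnFromTo ha ht hat

theorem IsContracting.dist_epsProj_le_of_variationOnFromTo_lt_nat_mul
    (hcontr : IsContracting ρ ε γ) (hratio : AntitoneOn (fun r => ρ r / r) (Ioi 0))
    (hε : 0 < ε) (hK : 0 < K) (hs : s.OrdConnected) (hcont : ContinuousOn h s)
    (hbv : LocallyBoundedVariationOn h s) (hfar : ∀ u ∈ s, K ≤ infDist (h u) γ)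
    (ht : t ∈ s) (htK : infDist (h t) γ ≤ K) (n : ℕ) :
    ∀ a ∈ s, a ≤ t → variationOnFromTo h s a t < n * K →
      ∀ p ∈ EpsProj γ ε (h a), ∀ q ∈ EpsProj γ ε (h t),
        dist p q ≤ ρ K / K * (variationOnFromTo h s a t + K) := by
  have hγ : γ.Nonempty := nonempty_of_infDist_pos (hK.trans_le (hfar t ht))
  induction n with
  | zero =>
    intro a _ hat hn
    rw [Nat.cast_zero, zero_mul] at hn
    exact absurd hn (variationOnFromTo.nonneg_of_le h s hat).not_gt
  | succ n ih =>
    intro a ha hat hn p hp q hq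
    rcases le_or_gt (dist (h a) (h t)) (infDist (h a) γ) with hnear | hfar'
    · exact hcontr.dist_epsProj_le_variationOnFromTo_add_of_dist_le hratio hK hbv ha ht hat
        (hfar a ha) htK hnear hp hq
    obtain ⟨b, hb, hbt, hKb, hhop⟩ :=
      hcontr.exists_variationOnFromTo_ge_and_dist_epsProj_le hratio hK hs hcont hbv
        ha ht hat (hfar a ha) hfar'
    have hsplit := variationOnFromTo.add hbv ha hb ht
    obtain ⟨p', hp'⟩ := EpsProj.nonempty hγ hε (h b)
    have hrest := ih b hb hbt (by push_cast at hn; linarith) p' hp' q hq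
    calc dist p q ≤ dist p p' + dist p' q := dist_triangle _ _ _
      _ ≤ ρ K / K * variationOnFromTo h s a b + ρ K / K * (variationOnFromTo h s b t + K) :=
        add_le_add (hhop p hp p' hp') hrest
      _ = ρ K / K * (variationOnFromTo h s a t + K) := by rw [← hsplit]; ring

theorem IsContracting.dist_epsProj_le_variationOnFromTo_add
    (hcontr : IsContracting ρ ε γ) (hratio : AntitoneOn (fun r => ρ r / r) (Ioi 0))
    (hε : 0 < ε) (hK : 0 < K) (hs : s.OrdConnected) (hcont : ContinuousOn h s)
    (hbv : LocallyBoundedVariationOn h s) (hfar : ∀ u ∈ s, K ≤ infDist (h u) γ)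
    (ha : a ∈ s) (ht : t ∈ s) (hat : a ≤ t) (htK : infDist (h t) γ ≤ K) {p q : X}
    (hp : p ∈ EpsProj γ ε (h a)) (hq : q ∈ EpsProj γ ε (h t)) :
    dist p q ≤ ρ K / K * (variationOnFromTo h s a t + K) :=
  hcontr.dist_epsProj_le_of_variationOnFromTo_lt_nat_mul hratio hε hK hs hcont hbv hfar ht htK
    (⌊variationOnFromTo h s a t / K⌋₊ + 1) a ha hat
    (by exact_mod_cast (div_lt_iff₀ hK).1 (Nat.lt_floor_add_one _)) p hp q hq

end Path

theorem stmt_4_general {X : Type*} [MetricSpace X] (ρ : ℝ → ℝ)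
    (hratio : AntitoneOn (fun r => ρ r / r) (Set.Ioi 0))
    (γ : Set X) (hcontr : IsContracting ρ 1 γ)
    (K : ℝ) (hK : 0 < K)
    (h : ℝ → X) (hcont : ContinuousOn h (Set.Icc 0 1))
    (hfar : ∀ s ∈ Set.Icc (0:ℝ) 1, K ≤ Metric.infDist (h s) γ)
    (h0 : Metric.infDist (h 0) γ = K) (h1 : Metric.infDist (h 1) γ = K) :
    ρ K / K ≥
      (dist (h 0) (h 1) - (2 * K + ρ K)) / (eVariationOn h (Set.Icc 0 1)).toReal := by
  have hγ : γ.Nonempty := nonempty_of_infDist_pos (h0 ▸ hK)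
  have hc : 0 ≤ ρ K / K := hcontr.div_nonneg_of_le_infDist hratio hK h0.ge
  set V := (eVariationOn h (Icc 0 1)).toReal
  rcases (ENNReal.toReal_nonneg : 0 ≤ V).eq_or_lt with hV | hV
  -- also the case `‖h‖ = ∞`, where `V = 0` and the right-hand side is the junk value `x / 0 = 0`
  · rwa [ge_iff_le, show V = 0 from hV.symm, div_zero]
  have hbv : LocallyBoundedVariationOn h (Icc 0 1) := fun _ _ _ _ =>
    ne_top_of_le_ne_top (ENNReal.toReal_pos_iff.1 hV).2.ne (eVariationOn.mono h inter_subset_left)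
  have hV01 : variationOnFromTo h (Icc 0 1) 0 1 = V := by
    rw [variationOnFromTo.eq_of_le h _ zero_le_one, inter_self]
  have hends := EpsProj.dist_le_infDist_add_infDist_add hγ one_pos fun p hp q hq =>
    hcontr.dist_epsProj_le_variationOnFromTo_add hratio one_pos hK ordConnected_Icc hcont hbv
      hfar (left_mem_Icc.2 zero_le_one) (right_mem_Icc.2 zero_le_one) zero_le_one h1.le hp hq
  rw [h0, h1, hV01, mul_add, div_mul_cancel₀ _ hK.ne'] at hends
  rw [ge_iff_le, div_le_iff₀ hV]
  linarith

/-- If γ is a (ρ,1)-contracting subset for a sublinear ρ with ρ(r)/r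
nonincreasing, and h : [0,1] → X is a path staying at distance ≥ K from γ whose
endpoints are at distance exactly K > 0 from γ, then
ρ(K)/K ≥ (|h| − (2K + ρ(K))) / ‖h‖. -/
theorem stmt_4 {X : Type*} [MetricSpace X] (ρ : ℝ → ℝ)
    (hmono : Monotone ρ) (hev : ∀ᶠ r in atTop, 0 ≤ ρ r)
    (hlim : Tendsto (fun r => ρ r / r) atTop (nhds 0))
    (hratio : AntitoneOn (fun r => ρ r / r) (Set.Ioi 0))
    (γ : Set X) (hγ : γ.Nonempty) (hcontr : IsContracting ρ 1 γ)
    (K : ℝ) (hK : 0 < K)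
    (h : ℝ → X) (hcont : ContinuousOn h (Set.Icc 0 1))
    (hfar : ∀ s ∈ Set.Icc (0:ℝ) 1, K ≤ Metric.infDist (h s) γ)
    (h0 : Metric.infDist (h 0) γ = K) (h1 : Metric.infDist (h 1) γ = K) :
    ρ K / K ≥
      (dist (h 0) (h 1) - (2 * K + ρ K)) / (eVariationOn h (Set.Icc 0 1)).toReal :=
  stmt_4_general ρ hratio γ hcontr K hK h hcont hfar h0 h1
end

section
/- Let H ≤ L ≤ G be groups with H and L finitely generated and G finitely generated. If H is stable in L and L is stable in G, then H is stable in G. -/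
/-- The word metric on a group G associated with a generating set S:
the distance between g and h is the least length of a word in S ∪ S⁻¹
representing g⁻¹h. -/
noncomputable def WordDist {G : Type*} [Group G] (S : Set G) (g h : G) : ℝ :=
  sInf {r : ℝ | ∃ l : List G, (∀ x ∈ l, x ∈ S ∨ x⁻¹ ∈ S) ∧ g⁻¹ * h = l.prod ∧
    r = l.length}

/-- A (κ,κ)-quasigeodesic segment defined on [0,T], with respect to a distance
function d. -/
def IsQG {A : Type*} (d : A → A → ℝ) (κ T : ℝ) (q : ℝ → A) : Prop :=
  ∀ s ∈ Set.Icc 0 T, ∀ t ∈ Set.Icc 0 T,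
    κ⁻¹ * |s - t| - κ ≤ d (q s) (q t) ∧ d (q s) (q t) ≤ κ * |s - t| + κ

/-- A subset Y of (A, d) is stable: for every κ ≥ 1 there is D ≥ 0 such that any
two (κ,κ)-quasigeodesics with the same endpoints lying in Y are D-Hausdorff close. -/
def StableSubset {A : Type*} (d : A → A → ℝ) (Y : Set A) : Prop :=
  ∀ κ : ℝ, 1 ≤ κ → ∃ D : ℝ, 0 ≤ D ∧
    ∀ (T T' : ℝ) (q q' : ℝ → A), 0 ≤ T → 0 ≤ T' →
      IsQG d κ T q → IsQG d κ T' q' →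
      q 0 = q' 0 → q T = q' T' → q 0 ∈ Y → q T ∈ Y →
      (∀ s ∈ Set.Icc 0 T, ∃ t ∈ Set.Icc 0 T', d (q s) (q' t) ≤ D) ∧
      (∀ t ∈ Set.Icc 0 T', ∃ s ∈ Set.Icc 0 T, d (q s) (q' t) ≤ D)

/-- A quasi-isometric embedding between sets with distance functions. -/
def QIEmb {A B : Type*} (dA : A → A → ℝ) (dB : B → B → ℝ) (f : A → B) : Prop :=
  ∃ κ lam : ℝ, 1 ≤ κ ∧ 0 ≤ lam ∧ ∀ a a' : A,
    κ⁻¹ * dA a a' - lam ≤ dB (f a) (f a') ∧ dB (f a) (f a') ≤ κ * dA a a' + lam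

/-- A subgroup H of G (with word metric from S, and H carrying the word metric from
TH) is stable: H is undistorted in G and is a stable subset of G. -/
def StableSubgroup {G : Type*} [Group G] (S : Set G) (H : Subgroup G)
    (TH : Set H) : Prop :=
  QIEmb (WordDist TH) (WordDist S) (fun h : H => (h : G)) ∧
    StableSubset (WordDist S) (H : Set G)

/-! Stability of `H` in `G` is inherited from `L` because `H ⊆ L`, so only undistortedness
needs an argument. Word metrics of two finite generating sets of one group are bi-Lipschitz
equivalent, so `H` with the metric of `SH` embeds quasi-isometrically in `H` with the metric
of `SHL`; composing with the quasi-isometric embeddings `H → L → G` gives the claim. -/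

section WordMetric

variable {A B : Type*} [Group A] [Group B]

def IsWord (T : Set B) (l : List B) : Prop :=
  ∀ y ∈ l, y ∈ T ∨ y⁻¹ ∈ T

lemma IsWord.append {T : Set B} {l l' : List B} (h : IsWord T l) (h' : IsWord T l') :
    IsWord T (l ++ l') := by
  intro y hy
  rcases List.mem_append.mp hy with hy | hy
  exacts [h y hy, h' y hy]

lemma exists_isWord_prod_eq {T : Set B} (hT : Subgroup.closure T = ⊤) (b : B) :
    ∃ l, IsWord T l ∧ l.prod = b := by
  have hb : b ∈ (Subgroup.closure T).toSubmonoid := hT ▸ Subgroup.mem_top b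
  rw [Subgroup.closure_toSubmonoid] at hb
  obtain ⟨l, hl, rfl⟩ := Submonoid.exists_list_of_mem_closure hb
  exact ⟨l, hl, rfl⟩

lemma wordDist_nonneg (S : Set B) (g h : B) : 0 ≤ WordDist S g h :=
  Real.sInf_nonneg (by rintro r ⟨l, -, -, rfl⟩; positivity)

lemma wordDist_le_length {S : Set B} {g h : B} {l : List B} (hl : IsWord S l)
    (he : l.prod = g⁻¹ * h) : WordDist S g h ≤ l.length :=
  csInf_le ⟨0, by rintro r ⟨l', -, -, rfl⟩; positivity⟩ ⟨l, hl, he.symm, rfl⟩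

variable {S : Set A} {T : Set B}

lemma exists_isWord_length_le (f : A →* B) (hS : S.Finite) (hT : Subgroup.closure T = ⊤) :
    ∃ C : ℕ, ∀ x, x ∈ S ∨ x⁻¹ ∈ S → ∃ l, IsWord T l ∧ l.prod = f x ∧ l.length ≤ C := by
  choose w hw hwprod using exists_isWord_prod_eq hT
  have hS' : (S ∪ S⁻¹).Finite := hS.union (Set.finite_inv.mpr hS)
  exact ⟨hS'.toFinset.sup fun s => (w (f s)).length, fun x hx => ⟨w (f x), hw _, hwprod _,
    Finset.le_sup (f := fun s => (w (f s)).length) (hS'.mem_toFinset.mpr hx)⟩⟩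

lemma exists_isWord_map_prod {f : A →* B} {C : ℕ}
    (hC : ∀ x, x ∈ S ∨ x⁻¹ ∈ S → ∃ l, IsWord T l ∧ l.prod = f x ∧ l.length ≤ C)
    {l : List A} (hl : IsWord S l) :
    ∃ l', IsWord T l' ∧ l'.prod = f l.prod ∧ l'.length ≤ C * l.length := by
  induction l with
  | nil => exact ⟨[], fun _ h => absurd h List.not_mem_nil, by simp, by simp⟩
  | cons x l ih =>
    obtain ⟨lx, hlx, hx, hlenx⟩ := hC x (hl x List.mem_cons_self)
    obtain ⟨l', hl', hprod, hlen⟩ := ih fun y hy => hl y (List.mem_cons_of_mem x hy)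
    refine ⟨lx ++ l', hlx.append hl', by simp [hx, hprod], ?_⟩
    simp only [List.length_append, List.length_cons]
    lia

lemma wordDist_map_le {f : A →* B} (hS : Subgroup.closure S = ⊤) {C : ℕ}
    (hC : ∀ x, x ∈ S ∨ x⁻¹ ∈ S → ∃ l, IsWord T l ∧ l.prod = f x ∧ l.length ≤ C) (a a' : A) :
    WordDist T (f a) (f a') ≤ C * WordDist S a a' := by
  conv_rhs => rw [WordDist, ← smul_eq_mul, ← Real.sInf_smul_of_nonneg (Nat.cast_nonneg C)]
  obtain ⟨l₀, hl₀, hprod₀⟩ := exists_isWord_prod_eq hS (a⁻¹ * a')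
  refine le_csInf ⟨_, Set.smul_mem_smul_set ⟨l₀, hl₀, hprod₀.symm, rfl⟩⟩ ?_
  rintro _ ⟨_, ⟨l, hl, hprod, rfl⟩, rfl⟩
  obtain ⟨l', hl', hprod', hlen⟩ := exists_isWord_map_prod hC hl
  calc WordDist T (f a) (f a') ≤ l'.length :=
        wordDist_le_length hl' (by rw [hprod', ← hprod, map_mul, map_inv])
    _ ≤ (C : ℝ) * l.length := by exact_mod_cast hlen

lemma exists_wordDist_map_le (f : A →* B) (hSf : S.Finite) (hS : Subgroup.closure S = ⊤)
    (hT : Subgroup.closure T = ⊤) :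
    ∃ C : ℕ, ∀ a a', WordDist T (f a) (f a') ≤ C * WordDist S a a' :=
  (exists_isWord_length_le f hSf hT).imp fun _ hC => wordDist_map_le hS hC

end WordMetric

section QuasiIsometry

variable {A B E : Type*} {dA : A → A → ℝ} {dB : B → B → ℝ}

lemma QIEmb.of_le_mul {f : A → B} {C : ℝ} (hC : 1 ≤ C)
    (h : ∀ a a', dB (f a) (f a') ≤ C * dA a a' ∧ dA a a' ≤ C * dB (f a) (f a')) :
    QIEmb dA dB f := by
  refine ⟨C, 0, hC, le_rfl, fun a a' => ⟨?_, by linarith [(h a a').1]⟩⟩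
  rw [sub_zero, inv_mul_le_iff₀ (by linarith)]
  exact (h a a').2

lemma QIEmb.comp {dE : E → E → ℝ} {f : A → B} {g : B → E} (hf : QIEmb dA dB f)
    (hg : QIEmb dB dE g) : QIEmb dA dE (g ∘ f) := by
  obtain ⟨κ₁, μ₁, hκ₁, hμ₁, hf⟩ := hf
  obtain ⟨κ₂, μ₂, hκ₂, hμ₂, hg⟩ := hg
  have hκ₂' : 0 < κ₂ := by linarith
  refine ⟨κ₁ * κ₂, κ₂ * μ₁ + μ₂, one_le_mul_of_one_le_of_one_le hκ₁ hκ₂, by positivity,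
    fun a a' => ⟨?_, ?_⟩⟩
  · have hμ : κ₂⁻¹ * μ₁ ≤ κ₂ * μ₁ := by
      gcongr
      exact (inv_le_one_of_one_le₀ hκ₂).trans hκ₂
    calc (κ₁ * κ₂)⁻¹ * dA a a' - (κ₂ * μ₁ + μ₂)
        ≤ κ₂⁻¹ * (κ₁⁻¹ * dA a a' - μ₁) - μ₂ := by rw [mul_inv]; nlinarith
      _ ≤ κ₂⁻¹ * dB (f a) (f a') - μ₂ := by gcongr; exact (hf a a').1
      _ ≤ dE (g (f a)) (g (f a')) := (hg (f a) (f a')).1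
  · calc dE (g (f a)) (g (f a')) ≤ κ₂ * dB (f a) (f a') + μ₂ := (hg (f a) (f a')).2
      _ ≤ κ₂ * (κ₁ * dA a a' + μ₁) + μ₂ := by gcongr; exact (hf a a').2
      _ = κ₁ * κ₂ * dA a a' + (κ₂ * μ₁ + μ₂) := by ring

end QuasiIsometry

lemma qiEmb_wordDist_mulEquiv {A B : Type*} [Group A] [Group B] (e : A ≃* B) {S : Set A}
    {T : Set B} (hSf : S.Finite) (hS : Subgroup.closure S = ⊤) (hTf : T.Finite)
    (hT : Subgroup.closure T = ⊤) : QIEmb (WordDist S) (WordDist T) e := by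
  obtain ⟨C₁, hC₁⟩ := exists_wordDist_map_le e.toMonoidHom hSf hS hT
  obtain ⟨C₂, hC₂⟩ := exists_wordDist_map_le e.symm.toMonoidHom hTf hT hS
  have hC₁C : (C₁ : ℝ) ≤ max C₁ C₂ + 1 := by
    exact_mod_cast (le_max_left C₁ C₂).trans (Nat.le_succ _)
  have hC₂C : (C₂ : ℝ) ≤ max C₁ C₂ + 1 := by
    exact_mod_cast (le_max_right C₁ C₂).trans (Nat.le_succ _)
  refine QIEmb.of_le_mul (C := max C₁ C₂ + 1) (by simp) fun a a' => ⟨?_, ?_⟩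
  · calc WordDist T (e a) (e a') ≤ C₁ * WordDist S a a' := hC₁ a a'
      _ ≤ _ := mul_le_mul_of_nonneg_right hC₁C (wordDist_nonneg S a a')
  · calc WordDist S a a' ≤ C₂ * WordDist T (e a) (e a') := by simpa using hC₂ (e a) (e a')
      _ ≤ _ := mul_le_mul_of_nonneg_right hC₂C (wordDist_nonneg T _ _)

lemma StableSubset.mono {A : Type*} {d : A → A → ℝ} {Y Z : Set A} (hY : StableSubset d Y)
    (hZY : Z ⊆ Y) : StableSubset d Z := fun κ hκ =>
  (hY κ hκ).imp fun _ ⟨hD, h⟩ => ⟨hD, fun T T' q q' hT hT' hq hq' h₀ hT₁ hq₀ hqT =>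
    h T T' q q' hT hT' hq hq' h₀ hT₁ (hZY hq₀) (hZY hqT)⟩

theorem stmt_6_general {G : Type*} [Group G] (H L : Subgroup G) (hHL : H ≤ L)
    (SG : Set G)
    (SL : Set L)
    (SH : Set H) (hSHf : SH.Finite) (hSHg : Subgroup.closure SH = ⊤)
    (SHL : Set (H.subgroupOf L)) (hSHLf : SHL.Finite)
    (hSHLg : Subgroup.closure SHL = ⊤)
    (h1 : StableSubgroup SL (H.subgroupOf L) SHL)
    (h2 : StableSubgroup SG L SL) :
    StableSubgroup SG H SH := by
  have hH : QIEmb (WordDist SH) (WordDist SHL) (Subgroup.subgroupOfEquivOfLe hHL).symm :=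
    qiEmb_wordDist_mulEquiv _ hSHf hSHg hSHLf hSHLg
  exact ⟨(hH.comp h1.1).comp h2.1, h2.2.mono hHL⟩

/-- If H ≤ L ≤ G are finitely generated, H is stable in L and L is
stable in G, then H is stable in G. -/
theorem stmt_6 {G : Type*} [Group G] (H L : Subgroup G) (hHL : H ≤ L)
    (SG : Set G) (hSGf : SG.Finite) (hSGg : Subgroup.closure SG = ⊤)
    (SL : Set L) (hSLf : SL.Finite) (hSLg : Subgroup.closure SL = ⊤)
    (SH : Set H) (hSHf : SH.Finite) (hSHg : Subgroup.closure SH = ⊤)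
    (SHL : Set (H.subgroupOf L)) (hSHLf : SHL.Finite)
    (hSHLg : Subgroup.closure SHL = ⊤)
    (h1 : StableSubgroup SL (H.subgroupOf L) SHL)
    (h2 : StableSubgroup SG L SL) :
    StableSubgroup SG H SH :=
  stmt_6_general H L hHL SG SL SH hSHf hSHg SHL hSHLf hSHLg h1 h2
end

section
/- Let X be a geodesic metric space, γ a continuous path with endpoints a, b, t ∈ (0, 1/2), and K > 0. Decompose γ into γ_l ⊔ γ_mid ⊔ γ_r where γ_mid is the t-middle of γ, γ_l the points at distance < t·d(a,b) from a (or before a), and γ_r the points at distance < t·d(a,b) from b (or after b). Let p be a continuous path with endpoints a, b avoiding the K-neighborhood of γ_mid. Suppose every point of γ_l has distance greater than 2K from every point of γ_r. Then among the maximal subarcs of p lying outside the open K-neighborhood of γ, there exists one whose one endpoint is within K of γ_l and whose other endpoint is within K of γ_r. -/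
/-!
Let `fₗ s = d(p s, γₗ)` and `fᵣ s = d(p s, γᵣ)`. The separation hypothesis gives
`fₗ + fᵣ ≥ 2K` everywhere, while `fₗ 0 = 0` and `fᵣ 1 = 0`. Take `v` the first time with
`fᵣ ≤ K` and `u` the last time before `v` with `fₗ ≤ K`; strictly between them both functions
exceed `K`, hence so does the distance to `Γ` (the distance to `γmid` is `> K` by assumption).
By continuity this persists on `[u, v]`, so the distance to `Γ` equals `K` at `u` and `v`.
-/

/-- A geodesic metric space. -/
def IsGeodesicSpace (X : Type*) [MetricSpace X] : Prop :=
  ∀ x y : X, ∃ f : ℝ → X, f 0 = x ∧ f (dist x y) = y ∧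
    ∀ s ∈ Set.Icc 0 (dist x y), ∀ t ∈ Set.Icc 0 (dist x y), dist (f s) (f t) = |s - t|

open Set Metric

section Interval

variable {f g : ℝ → ℝ} {a b K : ℝ}

lemma isCompact_Icc_inter_preimage_Iic (hg : ContinuousOn g (Icc a b)) :
    IsCompact (Icc a b ∩ g ⁻¹' Iic K) :=
  isCompact_Icc.of_isClosed_subset
    (hg.preimage_isClosed_of_isClosed isClosed_Icc isClosed_Iic) inter_subset_left

lemma ContinuousOn.le_on_Icc_of_le_on_Ioo (hab : a < b) (hf : ContinuousOn f (Icc a b))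
    (h : ∀ s ∈ Ioo a b, K ≤ f s) : ∀ s ∈ Icc a b, K ≤ f s := fun s hs =>
  ContinuousWithinAt.closure_le (by rwa [closure_Ioo hab.ne]) continuousWithinAt_const
    ((hf s hs).mono Ioo_subset_Icc_self) h

lemma exists_Icc_between_sublevel_sets (hab : a ≤ b) (hf : ContinuousOn f (Icc a b))
    (hg : ContinuousOn g (Icc a b)) (hfa : f a ≤ K) (hgb : g b ≤ K)
    (hsum : ∀ s ∈ Icc a b, 2 * K ≤ f s + g s) :
    ∃ u v, a ≤ u ∧ u ≤ v ∧ v ≤ b ∧ f u ≤ K ∧ g v ≤ K ∧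
      ∀ s ∈ Icc u v, K ≤ f s ∧ K ≤ g s := by
  obtain ⟨v, ⟨hv, hgv : g v ≤ K⟩, hv_least⟩ :=
    (isCompact_Icc_inter_preimage_Iic hg).exists_isLeast ⟨b, right_mem_Icc.2 hab, hgb⟩
  obtain ⟨u, ⟨hu, hfu : f u ≤ K⟩, hu_greatest⟩ :=
    (isCompact_Icc_inter_preimage_Iic (hf.mono (Icc_subset_Icc_right hv.2))).exists_isGreatest
      ⟨a, left_mem_Icc.2 hv.1, hfa⟩
  refine ⟨u, v, hu.1, hu.2, hv.2, hfu, hgv, ?_⟩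
  rcases hu.2.eq_or_lt with rfl | huv
  · intro s hs
    obtain rfl : s = u := by simpa using hs
    have := hsum s hv
    constructor <;> linarith
  have hsub : Icc u v ⊆ Icc a b := Icc_subset_Icc hu.1 hv.2
  have hf_ge : ∀ s ∈ Ioo u v, K ≤ f s := fun s hs =>
    (lt_of_not_ge fun h => (hu_greatest ⟨⟨hu.1.trans hs.1.le, hs.2.le⟩, h⟩).not_gt hs.1).le
  have hg_ge : ∀ s ∈ Ioo u v, K ≤ g s := fun s hs =>
    (lt_of_not_ge fun h => (hv_least ⟨hsub (Ioo_subset_Icc_self hs), h⟩).not_gt hs.2).le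
  exact fun s hs => ⟨(hf.mono hsub).le_on_Icc_of_le_on_Ioo huv hf_ge s hs,
    (hg.mono hsub).le_on_Icc_of_le_on_Ioo huv hg_ge s hs⟩

end Interval

section InfDist

variable {X : Type*} [PseudoMetricSpace X] {s t : Set X} {r : ℝ}

lemma Metric.le_infDist_add_infDist_of_le_dist (hs : s.Nonempty) (ht : t.Nonempty)
    (h : ∀ y ∈ s, ∀ z ∈ t, r ≤ dist y z) (x : X) : r ≤ infDist x s + infDist x t := by
  have h_left : ∀ z ∈ t, r - dist x z ≤ infDist x s := fun z hz =>
    (le_infDist hs).2 fun y hy => by linarith [h y hy z hz, dist_triangle_left y z x]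
  have h_right : r - infDist x s ≤ infDist x t :=
    (le_infDist ht).2 fun z hz => by linarith [h_left z hz]
  linarith

lemma Metric.le_infDist_union {x : X} (hs : r ≤ infDist x s) (ht : r ≤ infDist x t) :
    r ≤ infDist x (s ∪ t) := by
  rcases (s ∪ t).eq_empty_or_nonempty with hst | hst
  · obtain ⟨rfl, rfl⟩ := union_empty_iff.1 hst
    simpa using hs
  exact (le_infDist hst).2 fun y hy =>
    hy.elim (fun hy => hs.trans (infDist_le_dist_of_mem hy))
      (fun hy => ht.trans (infDist_le_dist_of_mem hy))

end InfDist

theorem stmt_13_general {X : Type*} [MetricSpace X]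
    (γl γmid γr Γ : Set X) (hΓ : Γ = γl ∪ γmid ∪ γr)
    (K : ℝ) (hK : 0 < K)
    (a b : X) (ha : a ∈ γl) (hb : b ∈ γr)
    (p : ℝ → X) (hp : ContinuousOn p (Set.Icc 0 1)) (hp0 : p 0 = a) (hp1 : p 1 = b)
    (havoid : ∀ u ∈ Set.Icc (0:ℝ) 1, K < Metric.infDist (p u) γmid)
    (hsep : ∀ x ∈ γl, ∀ y ∈ γr, 2 * K < dist x y) :
    ∃ u ∈ Set.Icc (0:ℝ) 1, ∃ v ∈ Set.Icc (0:ℝ) 1, u ≤ v ∧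
      (∀ s ∈ Set.Icc u v, K ≤ Metric.infDist (p s) Γ) ∧
      Metric.infDist (p u) Γ = K ∧ Metric.infDist (p v) Γ = K ∧
      ((Metric.infDist (p u) γl ≤ K ∧ Metric.infDist (p v) γr ≤ K) ∨
        (Metric.infDist (p u) γr ≤ K ∧ Metric.infDist (p v) γl ≤ K)) := by
  obtain ⟨u, v, hu0, huv, hv1, hlu, hrv, hfar⟩ := exists_Icc_between_sublevel_sets zero_le_one
    ((continuous_infDist_pt γl).comp_continuousOn hp)
    ((continuous_infDist_pt γr).comp_continuousOn hp)
    (by simp [hp0, infDist_zero_of_mem ha, hK.le]) (by simp [hp1, infDist_zero_of_mem hb, hK.le])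
    fun s _ => le_infDist_add_infDist_of_le_dist ⟨a, ha⟩ ⟨b, hb⟩ (fun y hy z hz => (hsep y hy z hz).le) (p s)
  have hΓ_ge : ∀ s ∈ Icc u v, K ≤ infDist (p s) Γ := fun s hs => by
    rw [hΓ]
    exact le_infDist_union (le_infDist_union (hfar s hs).1
      (havoid s ⟨hu0.trans hs.1, hs.2.trans hv1⟩).le) (hfar s hs).2
  have hΓ_le_l : infDist (p u) Γ ≤ infDist (p u) γl :=
    infDist_le_infDist_of_subset (hΓ ▸ subset_union_left.trans subset_union_left) ⟨a, ha⟩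
  have hΓ_le_r : infDist (p v) Γ ≤ infDist (p v) γr :=
    infDist_le_infDist_of_subset (hΓ ▸ subset_union_right) ⟨b, hb⟩
  exact ⟨u, ⟨hu0, huv.trans hv1⟩, v, ⟨hu0.trans huv, hv1⟩, huv, hΓ_ge,
    le_antisymm (hΓ_le_l.trans hlu) (hΓ_ge u (left_mem_Icc.2 huv)),
    le_antisymm (hΓ_le_r.trans hrv) (hΓ_ge v (right_mem_Icc.2 huv)), Or.inl ⟨hlu, hrv⟩⟩

/-- Decompose the image Γ of a path as Γ = γl ∪ γmid ∪ γr, where the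
endpoints a ∈ γl and b ∈ γr. If a continuous path p from a to b avoids the
K-neighborhood of γmid, and every point of γl is at distance > 2K from every point
of γr, then among the maximal subarcs of p lying outside the open K-neighborhood of
Γ there is one whose endpoints are at distance exactly K from Γ, one endpoint within
K of γl and the other within K of γr. -/
theorem stmt_13 {X : Type*} [MetricSpace X] (hX : IsGeodesicSpace X)
    (γ : ℝ → X) (J : Set ℝ) (hJ : J.OrdConnected)
    (γl γmid γr Γ : Set X) (hΓim : Γ = γ '' J) (hΓ : Γ = γl ∪ γmid ∪ γr)
    (t : ℝ) (ht : t ∈ Set.Ioo 0 (1/2 : ℝ)) (K : ℝ) (hK : 0 < K)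
    (a b : X) (ha : a ∈ γl) (hb : b ∈ γr)
    (p : ℝ → X) (hp : ContinuousOn p (Set.Icc 0 1)) (hp0 : p 0 = a) (hp1 : p 1 = b)
    (havoid : ∀ u ∈ Set.Icc (0:ℝ) 1, K < Metric.infDist (p u) γmid)
    (hsep : ∀ x ∈ γl, ∀ y ∈ γr, 2 * K < dist x y) :
    ∃ u ∈ Set.Icc (0:ℝ) 1, ∃ v ∈ Set.Icc (0:ℝ) 1, u ≤ v ∧
      (∀ s ∈ Set.Icc u v, K ≤ Metric.infDist (p s) Γ) ∧
      Metric.infDist (p u) Γ = K ∧ Metric.infDist (p v) Γ = K ∧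
      ((Metric.infDist (p u) γl ≤ K ∧ Metric.infDist (p v) γr ≤ K) ∨
        (Metric.infDist (p u) γr ≤ K ∧ Metric.infDist (p v) γl ≤ K)) :=
  stmt_13_general γl γmid γr Γ hΓ K hK a b ha hb p hp hp0 hp1 havoid hsep
end

section
/- In the Poincaré disk model of the hyperbolic plane ℍ², let γ be the geodesic through the origin given by the horizontal diameter. For every D > 0, there exists a path p with endpoints a, b on γ satisfying ‖p‖ ≤ 3·d(a, b), such that the point of γ corresponding to the origin does not lie in the D-neighborhood of p. Consequently, γ does not satisfy Property 5: it is not the case that for every C ≥ 1 there is K ≥ 0 such that every path p with endpoints a, b on γ and ‖p‖ ≤ C·d(a,b) contains the segment γ|_{[a,b]} in its K-neighborhood. -/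
/-!
Write `γ s = i e^s`. For `R` large, the path from `γ (-R)` to `γ R` climbs the imaginary axis to
height `e^{-D}`, crosses horizontally to the vertical line `re = sinh D`, climbs it to height
`e^D` and crosses back before climbing on to `γ R`. Every point `sinh D + i y` is at distance at
least `D` from `i`, since `cosh d = (cosh² D + y²) / 2y ≥ cosh D`, and every other point of the
path has `|log im| ≥ D`. A horizontal leg at height `y` has length at most its Euclidean length
divided by `y`, so the path has length at most `2R + 2 e^D sinh D ≤ 3 d(γ (-R), γ R)` once
`R ≥ D + e^D sinh D`. With `D > K` this refutes Property 5 for `C = 3`.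
-/

open Real Set UpperHalfPlane

theorem eVariationOn_le_mul_add_of_edist_le {α E F G : Type*} [LinearOrder α]
    [PseudoEMetricSpace E] [PseudoEMetricSpace F] [PseudoEMetricSpace G]
    {f : α → E} {g : α → F} {k : α → G} {s : Set α} (c : ENNReal)
    (h : ∀ a ∈ s, ∀ b ∈ s, edist (f a) (f b) ≤ c * edist (g a) (g b) + edist (k a) (k b)) :
    eVariationOn f s ≤ c * eVariationOn g s + eVariationOn k s := by
  refine iSup_le fun ⟨n, u, hu, us⟩ => ?_
  calc ∑ i ∈ Finset.range n, edist (f (u (i + 1))) (f (u i))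
      ≤ ∑ i ∈ Finset.range n,
          (c * edist (g (u (i + 1))) (g (u i)) + edist (k (u (i + 1))) (k (u i))) :=
        Finset.sum_le_sum fun i _ => h _ (us _) _ (us _)
    _ = c * ∑ i ∈ Finset.range n, edist (g (u (i + 1))) (g (u i))
          + ∑ i ∈ Finset.range n, edist (k (u (i + 1))) (k (u i)) := by
        rw [Finset.sum_add_distrib, Finset.mul_sum]
    _ ≤ c * eVariationOn g s + eVariationOn k s := by
        gcongr <;> exact eVariationOn.sum_le hu us

theorem Monotone.eVariationOn_Icc {f : ℝ → ℝ} (hf : Monotone f) (a b : ℝ) :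
    eVariationOn f (Icc a b) = ENNReal.ofReal (f b - f a) := by
  simpa using (hf.monotoneOn univ).eVariationOn_eq (mem_univ a) (mem_univ b)

def ramp (t : ℝ) : ℝ := max 0 (min t 1)

@[gcongr]
theorem ramp_le_ramp {s t : ℝ} (h : s ≤ t) : ramp s ≤ ramp t :=
  max_le_max le_rfl (min_le_min_right 1 h)

@[fun_prop]
theorem continuous_ramp : Continuous ramp := by
  unfold ramp; fun_prop

theorem ramp_of_nonpos {t : ℝ} (h : t ≤ 0) : ramp t = 0 :=
  max_eq_left (min_le_of_left_le h)

theorem ramp_of_one_le {t : ℝ} (h : 1 ≤ t) : ramp t = 1 := by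
  rw [ramp, min_eq_right h, max_eq_right zero_le_one]

noncomputable def ofReLogIm (x h : ℝ) : ℍ := mk ⟨x, exp h⟩ (exp_pos h)

theorem coe_ofReLogIm (x h : ℝ) : (ofReLogIm x h : ℂ) = x + exp h * Complex.I := by
  apply Complex.ext <;> simp [ofReLogIm, -Complex.ofReal_exp]

theorem Continuous.ofReLogIm {α : Type*} [TopologicalSpace α] {x h : α → ℝ} (hx : Continuous x)
    (hh : Continuous h) : Continuous fun a => ofReLogIm (x a) (h a) := by
  rw [isEmbedding_coe.continuous_iff]
  simp only [Function.comp_def, coe_ofReLogIm]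
  fun_prop

theorem dist_ofReLogIm_of_re_eq (x h h' : ℝ) :
    dist (ofReLogIm x h) (ofReLogIm x h') = |h - h'| :=
  ((isometry_vertical_line x).dist_eq h h').trans (Real.dist_eq h h')

theorem dist_ofReLogIm_of_im_eq_le (x x' h : ℝ) :
    dist (ofReLogIm x h) (ofReLogIm x' h) ≤ |x - x'| / exp h := by
  refine (dist_le_dist_coe_div_sqrt _ _).trans_eq ?_
  have him : (ofReLogIm x h : ℂ).im = (ofReLogIm x' h : ℂ).im := rfl
  rw [Complex.dist_of_im_eq him, Real.dist_eq]
  simp [ofReLogIm, Real.sqrt_mul_self (exp_pos h).le]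

theorem dist_ofReLogIm_le (x x' h h' : ℝ) :
    dist (ofReLogIm x h) (ofReLogIm x' h') ≤ |x - x'| / exp h' + |h - h'| :=
  calc dist (ofReLogIm x h) (ofReLogIm x' h')
      ≤ dist (ofReLogIm x h) (ofReLogIm x h') + dist (ofReLogIm x h') (ofReLogIm x' h') :=
        dist_triangle _ _ _
    _ ≤ |h - h'| + |x - x'| / exp h' := by
        rw [dist_ofReLogIm_of_re_eq]; gcongr; exact dist_ofReLogIm_of_im_eq_le x x' h'
    _ = |x - x'| / exp h' + |h - h'| := add_comm _ _

theorem dist_ofReLogIm_le_of_neg_le {x x' h h' c : ℝ} (hc : -c ≤ h') :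
    dist (ofReLogIm x h) (ofReLogIm x' h') ≤ exp c * |x - x'| + |h - h'| := by
  refine (dist_ofReLogIm_le x x' h h').trans ?_
  rw [div_eq_inv_mul, ← exp_neg]
  gcongr
  linarith

theorem abs_le_dist_ofReLogIm (x h : ℝ) : |h| ≤ dist (ofReLogIm 0 0) (ofReLogIm x h) := by
  simpa [ofReLogIm, Real.dist_eq] using dist_log_im_le (ofReLogIm 0 0) (ofReLogIm x h)

theorem le_dist_ofReLogIm_sinh {D : ℝ} (hD : 0 ≤ D) (h : ℝ) :
    D ≤ dist (ofReLogIm 0 0) (ofReLogIm (sinh D) h) := by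
  have hcosh : cosh D ≤ cosh (dist (ofReLogIm 0 0) (ofReLogIm (sinh D) h)) := by
    rw [cosh_dist']
    simp only [ofReLogIm, mk_re, mk_im, exp_zero]
    rw [le_div_iff₀ (by positivity)]
    nlinarith [sq_nonneg (cosh D - exp h), cosh_sq D]
  rw [cosh_le_cosh, abs_of_nonneg hD, abs_of_nonneg dist_nonneg] at hcosh
  exact hcosh

theorem dist_ofReLogIm_le_of_or {x x' h h' c : ℝ} (hx : x = 0 ∨ -c ≤ h) (hx' : x' = 0 ∨ -c ≤ h') :
    dist (ofReLogIm x h) (ofReLogIm x' h') ≤ exp c * |x - x'| + |h - h'| := by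
  rcases hx' with rfl | hh'
  · rcases hx with rfl | hh
    · simp [dist_ofReLogIm_of_re_eq]
    · rw [dist_comm, abs_sub_comm x, abs_sub_comm h]
      exact dist_ofReLogIm_le_of_neg_le hh
  · exact dist_ofReLogIm_le_of_neg_le hh'

noncomputable def detourRe (D t : ℝ) : ℝ := sinh D * ramp (5 * t - 1) - sinh D * ramp (5 * t - 3)

def detourLogIm (R D t : ℝ) : ℝ :=
  -R + (R - D) * ramp (5 * t) + 2 * D * ramp (5 * t - 2) + (R - D) * ramp (5 * t - 4)

/-- Along the imaginary axis from `i e^{-R}` to `i e^{-D}`, across to `sinh D + i e^{-D}`,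
up to `sinh D + i e^{D}`, back to `i e^{D}` and up to `i e^{R}`. -/
noncomputable def detour (R D t : ℝ) : ℍ := ofReLogIm (detourRe D t) (detourLogIm R D t)

section detour

variable {R D : ℝ}

theorem continuous_detour : Continuous (detour R D) := by
  unfold detour detourRe detourLogIm
  exact Continuous.ofReLogIm (by fun_prop) (by fun_prop)

theorem detourRe_of_le {t : ℝ} (ht : t ≤ 1 / 5) : detourRe D t = 0 := by
  rw [detourRe, ramp_of_nonpos (by linarith), ramp_of_nonpos (by linarith)]; ring

theorem detourRe_of_mem {t : ℝ} (ht : t ∈ Icc (2 / 5 : ℝ) (3 / 5)) : detourRe D t = sinh D := by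
  rw [detourRe, ramp_of_one_le (by linarith [ht.1]), ramp_of_nonpos (by linarith [ht.2])]; ring

theorem detourRe_one : detourRe D 1 = 0 := by
  norm_num [detourRe, ramp_of_one_le]

theorem detourLogIm_zero : detourLogIm R D 0 = -R := by
  norm_num [detourLogIm, ramp_of_nonpos]

theorem detourLogIm_one_fifth : detourLogIm R D (1 / 5) = -D := by
  norm_num [detourLogIm, ramp_of_nonpos, ramp_of_one_le]; ring

theorem detourLogIm_two_fifths : detourLogIm R D (2 / 5) = -D := by
  norm_num [detourLogIm, ramp_of_nonpos, ramp_of_one_le]; ring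

theorem detourLogIm_three_fifths : detourLogIm R D (3 / 5) = D := by
  norm_num [detourLogIm, ramp_of_nonpos, ramp_of_one_le]; ring

theorem detourLogIm_one : detourLogIm R D 1 = R := by
  norm_num [detourLogIm, ramp_of_one_le]; ring

theorem eVariationOn_detourRe_le (hD : 0 ≤ D) :
    eVariationOn (detourRe D) (Icc 0 1) ≤ ENNReal.ofReal (2 * sinh D) := by
  have hs : 0 ≤ sinh D := sinh_nonneg_iff.2 hD
  have hu : Monotone fun t => sinh D * ramp (5 * t - 1) := fun a b hab => by
    dsimp only; gcongr
  have hv : Monotone fun t => sinh D * ramp (5 * t - 3) := fun a b hab => by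
    dsimp only; gcongr
  calc eVariationOn (detourRe D) (Icc 0 1)
      ≤ 1 * eVariationOn (fun t => sinh D * ramp (5 * t - 1)) (Icc 0 1)
          + eVariationOn (fun t => sinh D * ramp (5 * t - 3)) (Icc 0 1) := by
        refine eVariationOn_le_mul_add_of_edist_le 1 fun a _ b _ => ?_
        simp only [one_mul, edist_dist, Real.dist_eq, detourRe]
        rw [← ENNReal.ofReal_add (abs_nonneg _) (abs_nonneg _)]
        exact ENNReal.ofReal_le_ofReal (by rw [sub_sub_sub_comm]; exact abs_sub _ _)
    _ = ENNReal.ofReal (sinh D) + ENNReal.ofReal (sinh D) := by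
        rw [one_mul, hu.eVariationOn_Icc, hv.eVariationOn_Icc]
        norm_num [ramp_of_one_le, ramp_of_nonpos]
    _ = ENNReal.ofReal (2 * sinh D) := by rw [← ENNReal.ofReal_add hs hs, two_mul]

variable (hD : 0 ≤ D) (hDR : D ≤ R)
include hD hDR

theorem monotone_detourLogIm : Monotone (detourLogIm R D) := by
  intro a b hab
  have : 0 ≤ R - D := sub_nonneg.2 hDR
  unfold detourLogIm
  gcongr

theorem detourRe_eq_zero_or_neg_le (t : ℝ) : detourRe D t = 0 ∨ -D ≤ detourLogIm R D t := by
  rcases le_total t (1 / 5) with ht | ht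
  · exact .inl (detourRe_of_le ht)
  · exact .inr (detourLogIm_one_fifth (R := R) ▸ monotone_detourLogIm hD hDR ht)

theorem eVariationOn_detour_le :
    eVariationOn (detour R D) (Icc 0 1) ≤ ENNReal.ofReal (2 * exp D * sinh D + 2 * R) := by
  calc eVariationOn (detour R D) (Icc 0 1)
      ≤ ENNReal.ofReal (exp D) * eVariationOn (detourRe D) (Icc 0 1)
          + eVariationOn (detourLogIm R D) (Icc 0 1) := by
        refine eVariationOn_le_mul_add_of_edist_le _ fun a _ b _ => ?_
        simp only [edist_dist, Real.dist_eq]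
        rw [← ENNReal.ofReal_mul (exp_pos D).le,
          ← ENNReal.ofReal_add (by positivity) (abs_nonneg _)]
        exact ENNReal.ofReal_le_ofReal (dist_ofReLogIm_le_of_or
          (detourRe_eq_zero_or_neg_le hD hDR a) (detourRe_eq_zero_or_neg_le hD hDR b))
    _ ≤ ENNReal.ofReal (exp D) * ENNReal.ofReal (2 * sinh D) + ENNReal.ofReal (R - -R) := by
        rw [(monotone_detourLogIm hD hDR).eVariationOn_Icc, detourLogIm_one, detourLogIm_zero]
        gcongr
        exact eVariationOn_detourRe_le hD
    _ = ENNReal.ofReal (2 * exp D * sinh D + 2 * R) := by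
        rw [← ENNReal.ofReal_mul (exp_pos D).le, ← ENNReal.ofReal_add
          (mul_nonneg (exp_pos D).le (by linarith [sinh_nonneg_iff.2 hD])) (by linarith)]
        ring_nf

theorem le_dist_detour (t : ℝ) : D ≤ dist (ofReLogIm 0 0) (detour R D t) := by
  rcases le_total t (2 / 5) with ht | ht
  · have := detourLogIm_two_fifths (R := R) (D := D) ▸ monotone_detourLogIm hD hDR ht
    exact (abs_le_dist_ofReLogIm _ _).trans' (le_abs.2 (.inr (by linarith)))
  rcases le_total t (3 / 5) with ht' | ht'
  · rw [detour, detourRe_of_mem ⟨ht, ht'⟩]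
    exact le_dist_ofReLogIm_sinh hD _
  · have := detourLogIm_three_fifths (R := R) (D := D) ▸ monotone_detourLogIm hD hDR ht'
    exact (abs_le_dist_ofReLogIm _ _).trans' (le_abs.2 (.inl this))

end detour

theorem exists_detour {D : ℝ} (hD : 0 ≤ D) :
    ∃ R, 0 ≤ R ∧ ∃ p : ℝ → ℍ, ContinuousOn p (Icc 0 1) ∧
      p 0 = ofReLogIm 0 (-R) ∧ p 1 = ofReLogIm 0 R ∧
      eVariationOn p (Icc 0 1) ≤ ENNReal.ofReal (3 * dist (ofReLogIm 0 (-R)) (ofReLogIm 0 R)) ∧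
      ∀ u, D ≤ dist (ofReLogIm 0 0) (p u) := by
  have hs : 0 ≤ exp D * sinh D := mul_nonneg (exp_pos D).le (sinh_nonneg_iff.2 hD)
  set R := D + exp D * sinh D
  have hDR : D ≤ R := le_add_of_nonneg_right hs
  refine ⟨R, hD.trans hDR, detour R D, continuous_detour.continuousOn, ?_, ?_, ?_,
    le_dist_detour hD hDR⟩
  · rw [detour, detourRe_of_le (by norm_num), detourLogIm_zero]
  · rw [detour, detourRe_one, detourLogIm_one]
  · refine (eVariationOn_detour_le hD hDR).trans (ENNReal.ofReal_le_ofReal ?_)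
    rw [dist_ofReLogIm_of_re_eq, abs_of_nonpos (by linarith)]
    linarith

/-- In the hyperbolic plane (upper half-plane model, isometric to the
Poincaré disk via a Cayley transform sending the origin to i and the horizontal
diameter to the imaginary axis), let γ(s) = i·e^s be the unit-speed geodesic through
the point corresponding to the origin. Then γ is a geodesic; for every D > 0 there
is a path p with endpoints a = γ(s), b = γ(s') on γ with arclength
‖p‖ ≤ 3·d(a,b) staying at distance ≥ D from γ(0); and consequently γ fails
Property 5. -/
theorem stmt_15 :
    ∀ γ : ℝ → UpperHalfPlane,
      (∀ s : ℝ, (γ s : ℂ) = Complex.I * Real.exp s) →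
      (∀ s s' : ℝ, dist (γ s) (γ s') = |s - s'|) ∧
      (∀ D : ℝ, 0 < D → ∃ (s s' : ℝ) (p : ℝ → UpperHalfPlane), s ≤ s' ∧
        ContinuousOn p (Set.Icc 0 1) ∧ p 0 = γ s ∧ p 1 = γ s' ∧
        eVariationOn p (Set.Icc 0 1) ≤ ENNReal.ofReal (3 * dist (γ s) (γ s')) ∧
        ∀ u ∈ Set.Icc (0:ℝ) 1, D ≤ dist (γ 0) (p u)) ∧
      ¬ (∀ C : ℝ, 1 ≤ C → ∃ K : ℝ, 0 ≤ K ∧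
          ∀ s s' : ℝ, s ≤ s' → ∀ p : ℝ → UpperHalfPlane,
            ContinuousOn p (Set.Icc 0 1) → p 0 = γ s → p 1 = γ s' →
            eVariationOn p (Set.Icc 0 1) ≤
              ENNReal.ofReal (C * dist (γ s) (γ s')) →
            ∀ u ∈ Set.Icc s s', ∃ v ∈ Set.Icc (0:ℝ) 1, dist (γ u) (p v) ≤ K) := by
  intro γ hγ
  obtain rfl : γ = ofReLogIm 0 := funext fun s =>
    UpperHalfPlane.ext (by rw [hγ, coe_ofReLogIm]; push_cast; ring)
  refine ⟨dist_ofReLogIm_of_re_eq 0, fun D hD => ?_, fun H => ?_⟩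
  · obtain ⟨R, hR, p, hp, hp0, hp1, hvar, hfar⟩ := exists_detour hD.le
    exact ⟨-R, R, p, by linarith, hp, hp0, hp1, hvar, fun u _ => hfar u⟩
  · obtain ⟨K, hK, hnear⟩ := H 3 (by norm_num)
    obtain ⟨R, hR, p, hp, hp0, hp1, hvar, hfar⟩ := exists_detour (D := K + 1) (by linarith)
    obtain ⟨v, -, hv⟩ := hnear (-R) R (by linarith) p hp hp0 hp1 hvar 0 ⟨by linarith, hR⟩
    linarith [hfar v]
end

section
/- Let X, Y be metric spaces and f : X → Y a Q-Lipschitz map that is proper in the strong sense: for every M_Y ≥ 0 there is M_X ≥ 0 such that d_Y(f(x), f(x')) ≤ M_Y implies d_X(x, x') ≤ M_X. Suppose H ⊆ X is a subset such that f restricted to H is a Q-quasi-isometric embedding and a point z ∈ X satisfies d_Y(f(z), y₀) ≤ K for some point y₀ with d_Y(f(a), y₀) ≥ (1/3)·d_Y(f(a), f(b)) and d_Y(y₀, f(b)) ≥ (1/3)·d_Y(f(a), f(b)), where a, b ∈ H. Then, provided d_X(a,b) ≥ 6Q(K + Q + Q²), we have d_X(a, z) ≥ d_X(a,b)/(6Q²).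 -/
/-! The quasi-isometric lower bound gives `d(a,b)/Q - Q ≤ d(f a, f b)`, and since `y₀` lies at least
a third of the way from `f a` to `f b`, `d(f a, f b) ≤ 3 d(f a, y₀) ≤ 3 (Q d(a,z) + K)`.
Solving for `d(a,z)` gives `d(a,z) ≥ d(a,b)/(3Q²) - 1/3 - K/Q`, and the lower bound on `d(a,b)`
makes the error terms at most `d(a,b)/(6Q²)`. -/

theorem dist_le_three_mul_add_of_third_le {Y : Type*} [PseudoMetricSpace Y] {p q w y₀ : Y} {K : ℝ}
    (hw : dist w y₀ ≤ K) (hthird : dist p y₀ ≥ (1/3) * dist p q) :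
    dist p q ≤ 3 * (dist p w + K) := by
  linarith [dist_triangle p w y₀]

theorem le_of_inv_mul_sub_le_three_mul {Q K D t : ℝ} (hQ : 0 < Q)
    (hD : D ≥ 6 * Q * (K + Q + Q ^ 2)) (h : Q⁻¹ * D - Q ≤ 3 * (Q * t + K)) :
    D / (6 * Q ^ 2) ≤ t := by
  have hQD : D - Q ^ 2 ≤ Q * (3 * (Q * t + K)) := by
    have := mul_le_mul_of_nonneg_left h hQ.le
    rwa [mul_sub, ← mul_assoc, mul_inv_cancel₀ hQ.ne', one_mul, ← pow_two] at this
  rw [div_le_iff₀ (by positivity)]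
  nlinarith [pow_pos hQ 3]

theorem stmt_16_general {X Y : Type*} [MetricSpace X] [MetricSpace Y]
    (f : X → Y) (Q : ℝ) (hQ : 1 ≤ Q)
    (hlip : ∀ x x' : X, dist (f x) (f x') ≤ Q * dist x x')
    (H : Set X)
    (hqie : ∀ u ∈ H, ∀ v ∈ H,
      Q⁻¹ * dist u v - Q ≤ dist (f u) (f v) ∧ dist (f u) (f v) ≤ Q * dist u v + Q)
    (a b : X) (ha : a ∈ H) (hb : b ∈ H) (z : X) (y₀ : Y) (K : ℝ)
    (hz : dist (f z) y₀ ≤ K)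
    (h1 : dist (f a) y₀ ≥ (1/3) * dist (f a) (f b))
    (hd : dist a b ≥ 6 * Q * (K + Q + Q ^ 2)) :
    dist a z ≥ dist a b / (6 * Q ^ 2) := by
  have hfab : dist (f a) (f b) ≤ 3 * (Q * dist a z + K) :=
    (dist_le_three_mul_add_of_third_le hz h1).trans (by linarith [hlip a z])
  exact le_of_inv_mul_sub_le_three_mul (by linarith) hd ((hqie a ha b hb).1.trans hfab)

/-- Let f : X → Y be Q-Lipschitz and metrically proper, restricting to
a Q-quasi-isometric embedding on H ⊆ X. If z ∈ X maps K-close to a point y₀ lying in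
the middle third (in Y) between f(a) and f(b) with a, b ∈ H, and
d(a,b) ≥ 6Q(K + Q + Q²), then d(a,z) ≥ d(a,b)/(6Q²). -/
theorem stmt_16 {X Y : Type*} [MetricSpace X] [MetricSpace Y]
    (f : X → Y) (Q : ℝ) (hQ : 1 ≤ Q)
    (hlip : ∀ x x' : X, dist (f x) (f x') ≤ Q * dist x x')
    (hproper : ∀ MY : ℝ, 0 ≤ MY → ∃ MX : ℝ, 0 ≤ MX ∧
      ∀ x x' : X, dist (f x) (f x') ≤ MY → dist x x' ≤ MX)
    (H : Set X)
    (hqie : ∀ u ∈ H, ∀ v ∈ H,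
      Q⁻¹ * dist u v - Q ≤ dist (f u) (f v) ∧ dist (f u) (f v) ≤ Q * dist u v + Q)
    (a b : X) (ha : a ∈ H) (hb : b ∈ H) (z : X) (y₀ : Y) (K : ℝ) (hK : 0 ≤ K)
    (hz : dist (f z) y₀ ≤ K)
    (h1 : dist (f a) y₀ ≥ (1/3) * dist (f a) (f b))
    (h2 : dist y₀ (f b) ≥ (1/3) * dist (f a) (f b))
    (hd : dist a b ≥ 6 * Q * (K + Q + Q ^ 2)) :
    dist a z ≥ dist a b / (6 * Q ^ 2) :=
  stmt_16_general f Q hQ hlip H hqie a b ha hb z y₀ K hz h1 hd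
end
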